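/- arXiv:1408.2290 — 2 statements merged into one kernel-verified Lean document; each statement's English description precedes it below -/
import Mathlib

section
/- Let n be a positive integer, let X and Y be real symmetric n×n matrices with Y positive definite, and let K = Y^{-1/2} [−(X+iY), Iₙ] be the n×2n complex matrix formed by horizontally concatenating −Y^{-1/2}(X+iY) and Y^{-1/2}, where Y^{-1/2} is the inverse of the positive-definite square root of Y. Then the imaginary part of the 2n×2n matrix K†K (entrywise imaginary part, where K† is the conjugate transpose) equals the symplectic matrix Σ = [[0, Iₙ],[−Iₙ, 0]]; consequently the drift matrix A = Σ·Im(K†K) equals −I_{2n}, which is Hurwitz. -/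
/-!
STATEMENT 0: For real symmetric n×n matrices X, Y with Y positive definite and
K = Y^{-1/2}·[−(X+iY), Iₙ], the entrywise imaginary part of K†K equals the
symplectic matrix Σ = [[0, Iₙ],[−Iₙ, 0]]; consequently A = Σ·Im(K†K) = −I_{2n},
which is Hurwitz.
-/

open Matrix

noncomputable section

/-- The 2n×2n symplectic form Σ = [[0, Iₙ],[−Iₙ, 0]], with the two halves of the
index set given by the two summands of `Fin n ⊕ Fin n`. -/
def sympJ (n : ℕ) : Matrix (Fin n ⊕ Fin n) (Fin n ⊕ Fin n) ℝ :=
  Matrix.fromBlocks 0 1 (-1) 0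

/-- A real square matrix is Hurwitz if every eigenvalue (i.e. every complex root of its
characteristic polynomial) has negative real part. -/
def IsHurwitz {m : Type*} [Fintype m] [DecidableEq m] (A : Matrix m m ℝ) : Prop :=
  ∀ z : ℂ, (A.map Complex.ofReal).charpoly.IsRoot z → z.re < 0

/-- The positive semidefinite square root of a positive semidefinite matrix (the definition
`Matrix.PosSemidef.sqrt` of the older Mathlib, which has since been removed). -/
def Matrix.PosSemidef.sqrt {n : Type*} [Fintype n] [DecidableEq n] {𝕜 : Type*} [RCLike 𝕜]
    [PartialOrder 𝕜] [StarOrderedRing 𝕜] {A : Matrix n n 𝕜} (hA : A.PosSemidef) : Matrix n n 𝕜 :=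
  (hA.1.eigenvectorUnitary : Matrix n n 𝕜) * diagonal ((↑) ∘ (√·) ∘ hA.1.eigenvalues) *
    (star (hA.1.eigenvectorUnitary : Matrix n n 𝕜))

/-- The coupling matrix K = Y^{-1/2}·[−(X+iY), Iₙ], an n×2n complex matrix, where
Y^{-1/2} is the inverse of the positive-definite square root of Y. -/
def couplingK {n : ℕ} (X Y : Matrix (Fin n) (Fin n) ℝ) (hY : Y.PosDef) :
    Matrix (Fin n) (Fin n ⊕ Fin n) ℂ :=
  (hY.posSemidef.sqrt⁻¹).map Complex.ofReal *
    Matrix.fromCols (-(X.map Complex.ofReal + Complex.I • Y.map Complex.ofReal)) 1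

/-!
Split K = R + iT with R = Y^{-1/2}[-X, 1] and T = Y^{-1/2}[-Y, 0] real. Then
Im(K†K) = RᵀT - TᵀR, and since (Y^{-1/2})ᵀY^{-1/2} = Y⁻¹ this is
[-X, 1]ᵀY⁻¹[-Y, 0] - [-Y, 0]ᵀY⁻¹[-X, 1], whose blocks are Xᵀ - X = 0, 1, -1 and 0.
Finally Σ² = -1, whose only eigenvalue is -1.
-/

namespace Matrix.PosSemidef

variable {n : Type*} [Fintype n] [DecidableEq n] {A : Matrix n n ℝ}

lemma isHermitian_sqrt (hA : A.PosSemidef) : hA.sqrt.IsHermitian :=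
  isHermitian_mul_mul_conjTranspose _ (isHermitian_diagonal _)

lemma sqrt_mul_self (hA : A.PosSemidef) : hA.sqrt * hA.sqrt = A := by
  set U : Matrix n n ℝ := (hA.1.eigenvectorUnitary : Matrix n n ℝ)
  have hU : star U * U = 1 := Unitary.coe_star_mul_self _
  have hd : diagonal (RCLike.ofReal ∘ (√·) ∘ hA.1.eigenvalues : n → ℝ) *
      diagonal (RCLike.ofReal ∘ (√·) ∘ hA.1.eigenvalues) =
        diagonal (RCLike.ofReal ∘ hA.1.eigenvalues) := by
    rw [diagonal_mul_diagonal]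
    congr 1
    funext i
    simp [Real.mul_self_sqrt (hA.eigenvalues_nonneg i)]
  conv_rhs => rw [hA.1.spectral_theorem, Unitary.conjStarAlgAut_apply, ← hd]
  simp only [sqrt, Matrix.mul_assoc]
  rw [← Matrix.mul_assoc (star U) U, hU, Matrix.one_mul]

lemma transpose_inv_sqrt_mul_inv_sqrt (hA : A.PosSemidef) :
    (hA.sqrt⁻¹)ᵀ * hA.sqrt⁻¹ = A⁻¹ := by
  rw [← conjTranspose_eq_transpose_of_trivial, conjTranspose_nonsing_inv,
    hA.isHermitian_sqrt.eq, ← Matrix.mul_inv_rev, hA.sqrt_mul_self]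

end Matrix.PosSemidef

lemma im_conjTranspose_mul_self_of_re_im {m k : Type*} [Fintype m] (R T : Matrix m k ℝ) :
    ((R.map Complex.ofReal + Complex.I • T.map Complex.ofReal)ᴴ *
        (R.map Complex.ofReal + Complex.I • T.map Complex.ofReal)).map Complex.im =
      Rᵀ * T - Tᵀ * R := by
  ext i j
  simp [Matrix.mul_apply, Complex.im_sum, sub_eq_add_neg, Finset.sum_add_distrib]

lemma Matrix.map_ofReal_mul {l m k : Type*} [Fintype m] (A : Matrix l m ℝ) (B : Matrix m k ℝ) :
    (A * B).map Complex.ofReal = A.map Complex.ofReal * B.map Complex.ofReal :=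
  Matrix.map_mul (f := Complex.ofRealHom)

lemma couplingK_eq_re_add_I_mul_im {n : ℕ} (X Y : Matrix (Fin n) (Fin n) ℝ) (hY : Y.PosDef) :
    couplingK X Y hY =
      (hY.posSemidef.sqrt⁻¹ * fromCols (-X) 1).map Complex.ofReal +
        Complex.I • (hY.posSemidef.sqrt⁻¹ * fromCols (-Y) 0).map Complex.ofReal := by
  have hcols : fromCols (-(X.map Complex.ofReal + Complex.I • Y.map Complex.ofReal))
      (1 : Matrix (Fin n) (Fin n) ℂ) = (fromCols (-X) 1).map Complex.ofReal + Complex.I • (fromCols (-Y) 0).map Complex.ofReal := by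
    ext i (j | j) <;> simp [one_apply, apply_ite, add_comm]
  rw [couplingK, hcols, Matrix.mul_add, Matrix.mul_smul, map_ofReal_mul, map_ofReal_mul]

lemma Matrix.transpose_fromCols_mul_mul_fromCols {R m n₁ n₂ k₁ k₂ : Type*} [CommRing R]
    [Fintype m] (A : Matrix m n₁ R) (B : Matrix m n₂ R) (N : Matrix m m R)
    (C : Matrix m k₁ R) (D : Matrix m k₂ R) :
    (fromCols A B)ᵀ * N * fromCols C D =
      fromBlocks (Aᵀ * N * C) (Aᵀ * N * D) (Bᵀ * N * C) (Bᵀ * N * D) := by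
  rw [transpose_fromCols, fromRows_mul, fromRows_mul_fromCols]

lemma im_conjTranspose_couplingK_mul_couplingK {n : ℕ} {X Y : Matrix (Fin n) (Fin n) ℝ}
    (hX : X.IsSymm) (hY : Y.PosDef) :
    ((couplingK X Y hY)ᴴ * couplingK X Y hY).map Complex.im = sympJ n := by
  have hgram (B C : Matrix (Fin n) (Fin n ⊕ Fin n) ℝ) :
      (hY.posSemidef.sqrt⁻¹ * B)ᵀ * (hY.posSemidef.sqrt⁻¹ * C) = Bᵀ * Y⁻¹ * C := by
    rw [transpose_mul, Matrix.mul_assoc, ← Matrix.mul_assoc _ hY.posSemidef.sqrt⁻¹,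
      hY.posSemidef.transpose_inv_sqrt_mul_inv_sqrt, ← Matrix.mul_assoc]
  have hYt : Yᵀ = Y := by simpa [← conjTranspose_eq_transpose_of_trivial] using hY.isHermitian.eq
  have hdet : IsUnit Y.det := (isUnit_iff_isUnit_det Y).mp hY.isUnit
  have hYinv : Y⁻¹ * Y = 1 := Y.nonsing_inv_mul hdet
  have hinvY : Y * Y⁻¹ = 1 := Y.mul_nonsing_inv hdet
  rw [couplingK_eq_re_add_I_mul_im, im_conjTranspose_mul_self_of_re_im, hgram, hgram,
    transpose_fromCols_mul_mul_fromCols, transpose_fromCols_mul_mul_fromCols, sub_eq_add_neg,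
    fromBlocks_neg, fromBlocks_add, sympJ]
  congr 1 <;> simp [Matrix.mul_assoc, hX.eq, hYt, hYinv, hinvY]

lemma sympJ_mul_self (n : ℕ) : sympJ n * sympJ n = -1 := by
  rw [sympJ, fromBlocks_multiply, ← fromBlocks_one, fromBlocks_neg]
  simp

lemma isHurwitz_diagonal {m : Type*} [Fintype m] [DecidableEq m] {d : m → ℝ}
    (hd : ∀ i, d i < 0) : IsHurwitz (diagonal d) := by
  intro z hz
  rw [diagonal_map Complex.ofReal_zero, charpoly_diagonal, Polynomial.IsRoot,
    Polynomial.eval_prod, Finset.prod_eq_zero_iff] at hz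
  obtain ⟨i, -, hi⟩ := hz
  rw [Polynomial.eval_sub, Polynomial.eval_X, Polynomial.eval_C, sub_eq_zero] at hi
  simpa [hi] using hd i

theorem im_KdagK_eq_symplectic_and_drift_hurwitz_general
    (n : ℕ) (X Y : Matrix (Fin n) (Fin n) ℝ)
    (hX : X.IsSymm) (hY : Y.PosDef) :
    ((couplingK X Y hY)ᴴ * couplingK X Y hY).map Complex.im = sympJ n ∧
    sympJ n * ((couplingK X Y hY)ᴴ * couplingK X Y hY).map Complex.im = -1 ∧
    IsHurwitz (sympJ n * ((couplingK X Y hY)ᴴ * couplingK X Y hY).map Complex.im) := by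
  have hIm := im_conjTranspose_couplingK_mul_couplingK hX hY
  have hdrift : sympJ n * ((couplingK X Y hY)ᴴ * couplingK X Y hY).map Complex.im = -1 := by
    rw [hIm, sympJ_mul_self]
  refine ⟨hIm, hdrift, ?_⟩
  rw [hdrift, ← diagonal_one, diagonal_neg]
  exact isHurwitz_diagonal fun _ => neg_one_lt_zero

theorem im_KdagK_eq_symplectic_and_drift_hurwitz
    (n : ℕ) (hn : 0 < n) (X Y : Matrix (Fin n) (Fin n) ℝ)
    (hX : X.IsSymm) (hYs : Y.IsSymm) (hY : Y.PosDef) :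
    ((couplingK X Y hY)ᴴ * couplingK X Y hY).map Complex.im = sympJ n ∧
    sympJ n * ((couplingK X Y hY)ᴴ * couplingK X Y hY).map Complex.im = -1 ∧
    IsHurwitz (sympJ n * ((couplingK X Y hY)ᴴ * couplingK X Y hY).map Complex.im) :=
  im_KdagK_eq_symplectic_and_drift_hurwitz_general n X Y hX hY
end
end

section
/- Let n be a positive integer and let X and Y be real symmetric n×n matrices with Y positive definite. Then (2·V_p·Σ)² = −I_{2n}, where V_p = (1/2)[[Y⁻¹, Y⁻¹X],[XY⁻¹, XY⁻¹X + Y]] and Σ = [[0, Iₙ],[−Iₙ, 0]]. -/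
/-!
STATEMENT 7: For real symmetric n×n matrices X, Y with Y positive definite,
(2·V_p·Σ)² = −I_{2n}, where V_p = (1/2)·[[Y⁻¹, Y⁻¹X],[XY⁻¹, XY⁻¹X + Y]] and
Σ = [[0, Iₙ],[−Iₙ, 0]].
-/

open Matrix

noncomputable section

/-- The covariance matrix V_p = (1/2)·[[Y⁻¹, Y⁻¹X],[XY⁻¹, XY⁻¹X + Y]] of the n-mode
pure Gaussian state parametrized by {X, Y}. -/
def pureCov {n : ℕ} (X Y : Matrix (Fin n) (Fin n) ℝ) :
    Matrix (Fin n ⊕ Fin n) (Fin n ⊕ Fin n) ℝ :=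
  (1/2 : ℝ) • Matrix.fromBlocks Y⁻¹ (Y⁻¹ * X) (X * Y⁻¹) (X * Y⁻¹ * X + Y)

/-! Writing `2 V_p Σ = L K L⁻¹` with the shear `L = [[1, 0], [X, 1]]` and
`K = [[0, Y⁻¹], [-Y, 0]]`, purity reduces to `K² = -1`. -/

variable {m n α : Type*} [Fintype m] [Fintype n] [DecidableEq m] [DecidableEq n]

theorem fromBlocks_mul_fromBlocks_zero_one_neg_one_zero [Ring α] (A B C D : Matrix n n α) :
    fromBlocks A B C D * fromBlocks 0 1 (-1) 0 = fromBlocks (-B) A (-D) C := by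
  simp [fromBlocks_multiply]

def lowerShear [Ring α] (X : Matrix n m α) : (Matrix (m ⊕ n) (m ⊕ n) α)ˣ where
  val := fromBlocks 1 0 X 1
  inv := fromBlocks 1 0 (-X) 1
  val_inv := by simp [fromBlocks_multiply]
  inv_val := by simp [fromBlocks_multiply]

theorem fromBlocks_zero_inv_neg_zero_sq [CommRing α] {Y : Matrix n n α} (hY : IsUnit Y.det) :
    fromBlocks 0 Y⁻¹ (-Y) 0 ^ 2 = -1 := by
  simp [sq, fromBlocks_multiply, nonsing_inv_mul Y hY, mul_nonsing_inv Y hY, ← fromBlocks_one,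
    fromBlocks_neg]

theorem two_smul_pureCov_mul_sympJ_eq_conj {n : ℕ} (X Y : Matrix (Fin n) (Fin n) ℝ) :
    (2 : ℝ) • (pureCov X Y * sympJ n) =
      lowerShear X * fromBlocks 0 Y⁻¹ (-Y) 0 * (lowerShear X)⁻¹.val := by
  rw [pureCov, sympJ, smul_mul_assoc, smul_smul, fromBlocks_mul_fromBlocks_zero_one_neg_one_zero]
  simp only [lowerShear, Units.inv_mk]
  simp [fromBlocks_multiply]

theorem pureCov_purity_condition_general
    (n : ℕ) (X Y : Matrix (Fin n) (Fin n) ℝ)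
    (hY : Y.PosDef) :
    ((2 : ℝ) • (pureCov X Y * sympJ n)) ^ 2 = -1 := by
  rw [two_smul_pureCov_mul_sympJ_eq_conj, Units.conj_pow,
    fromBlocks_zero_inv_neg_zero_sq ((isUnit_iff_isUnit_det Y).mp hY.isUnit), mul_neg_one, neg_mul,
    Units.mul_inv]

theorem pureCov_purity_condition
    (n : ℕ) (hn : 0 < n) (X Y : Matrix (Fin n) (Fin n) ℝ)
    (hX : X.IsSymm) (hYs : Y.IsSymm) (hY : Y.PosDef) :
    ((2 : ℝ) • (pureCov X Y * sympJ n)) ^ 2 = -1 :=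
  pureCov_purity_condition_general n X Y hY
end
end
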